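/- arXiv:2202.11371 — 3 statements merged into one kernel-verified Lean document; each statement's English description precedes it below -/
import Mathlib

section
/- With boundary data P₀, P₁, unit tangents t₀, t₁, curvatures κ₀, κ₁, and β₀ = β₁ = 0, α₁ = ±λα₀ (λ > 0 fixed), the length-constraint function e(α₀) := |U² − V| − |U|² + v, where U, V, v are given in terms of the preimage coefficients, is an even function of α₀, and e(0) = (140/13)·(|P₁ − P₀| − L). -/
open Complex

/-- The square root `χ(c)` from Lemma 1. -/
noncomputable def chi (c : ℂ) : ℂ :=
  (Real.sqrt 2 / 2 : ℝ) *
    ((Real.sqrt (‖c‖ + c.re) : ℂ) +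
      Complex.I * ((c.im : ℂ) / (Real.sqrt (‖c‖ + c.re) : ℂ)))

/-- The length-constraint residual `e(α₀,α₁,β₀,β₁) = |U²−V| − |U|² + v` of the degree-7
`C³` PH biarc interpolant. -/
noncomputable def lengthResidual (P₀ P₁ t₀ t₁ : ℂ) (κ₀ κ₁ L α₀ α₁ β₀ β₁ : ℝ) : ℝ :=
  let wA0 : ℂ := (α₀ : ℂ) * chi t₀
  let wB3 : ℂ := (α₁ : ℂ) * chi t₁
  let wA1 : ℂ := (((α₀ ^ 2 + β₀ / 12 : ℝ) : ℂ) * t₀ +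
      ((κ₀ : ℂ) * ((α₀ ^ 4 / 12 : ℝ) : ℂ)) * (Complex.I * t₀)) / wA0
  let wB2 : ℂ := (((α₁ ^ 2 - β₁ / 12 : ℝ) : ℂ) * t₁ -
      ((κ₁ : ℂ) * ((α₁ ^ 4 / 12 : ℝ) : ℂ)) * (Complex.I * t₁)) / wB3
  let U : ℂ := (5 * (wA0 + wB3) + 39 * (wA1 + wB2)) / 52
  let V : ℂ := (40 * (wA0 ^ 2 + wB3 ^ 2) + 49 * (wA0 * wA1 + wB2 * wB3) +
      62 * (wA1 ^ 2 + wB2 ^ 2) + wA0 * wB2 + wA1 * wB3 + 28 * wA1 * wB2 -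
      560 * (P₁ - P₀)) / 52
  let v : ℝ := (40 * ‖wA0‖ ^ 2 + 40 * ‖wB3‖ ^ 2 +
      62 * ‖wA1‖ ^ 2 + 62 * ‖wB2‖ ^ 2 +
      (49 * (wA0 * starRingEnd ℂ wA1) + 49 * (wB2 * starRingEnd ℂ wB3) +
        28 * (wA1 * starRingEnd ℂ wB2) + wA0 * starRingEnd ℂ wB2 +
        wA1 * starRingEnd ℂ wB3).re - 560 * L) / 52
  ‖U ^ 2 - V‖ - ‖U‖ ^ 2 + v

/-!
Apart from the constants `P₁ − P₀` and `L`, the residual is built from expressions of degree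
two in the preimage coefficients `wA0, wA1, wB2, wB3` (`U²`, `V`, `|U|²`, `v`), so it is
unchanged when all four coefficients change sign. Replacing `(α₀, α₁)` by `(−α₀, −α₁)` does
exactly that: `wA0, wB3` are linear in `α`, and `wA1, wB2` are an even numerator over them.
At `α₀ = α₁ = 0` all four coefficients vanish (for `wA1, wB2` through `x / 0 = 0`, which agrees
with their limit since the numerators are `O(α²)`), leaving `|560 (P₁ − P₀)| / 52 − 560 L / 52`.
-/

noncomputable def residualOfCoeffs (P₀ P₁ : ℂ) (L : ℝ) (wA0 wA1 wB2 wB3 : ℂ) : ℝ :=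
  let U : ℂ := (5 * (wA0 + wB3) + 39 * (wA1 + wB2)) / 52
  let V : ℂ := (40 * (wA0 ^ 2 + wB3 ^ 2) + 49 * (wA0 * wA1 + wB2 * wB3) +
      62 * (wA1 ^ 2 + wB2 ^ 2) + wA0 * wB2 + wA1 * wB3 + 28 * wA1 * wB2 -
      560 * (P₁ - P₀)) / 52
  let v : ℝ := (40 * ‖wA0‖ ^ 2 + 40 * ‖wB3‖ ^ 2 +
      62 * ‖wA1‖ ^ 2 + 62 * ‖wB2‖ ^ 2 +
      (49 * (wA0 * starRingEnd ℂ wA1) + 49 * (wB2 * starRingEnd ℂ wB3) +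
        28 * (wA1 * starRingEnd ℂ wB2) + wA0 * starRingEnd ℂ wB2 +
        wA1 * starRingEnd ℂ wB3).re - 560 * L) / 52
  ‖U ^ 2 - V‖ - ‖U‖ ^ 2 + v

lemma lengthResidual_eq_residualOfCoeffs (P₀ P₁ t₀ t₁ : ℂ) (κ₀ κ₁ L α₀ α₁ β₀ β₁ : ℝ) :
    lengthResidual P₀ P₁ t₀ t₁ κ₀ κ₁ L α₀ α₁ β₀ β₁ =
      residualOfCoeffs P₀ P₁ L ((α₀ : ℂ) * chi t₀)
        ((((α₀ ^ 2 + β₀ / 12 : ℝ) : ℂ) * t₀ +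
          ((κ₀ : ℂ) * ((α₀ ^ 4 / 12 : ℝ) : ℂ)) * (Complex.I * t₀)) / ((α₀ : ℂ) * chi t₀))
        ((((α₁ ^ 2 - β₁ / 12 : ℝ) : ℂ) * t₁ -
          ((κ₁ : ℂ) * ((α₁ ^ 4 / 12 : ℝ) : ℂ)) * (Complex.I * t₁)) / ((α₁ : ℂ) * chi t₁))
        ((α₁ : ℂ) * chi t₁) := rfl

lemma residualOfCoeffs_neg (P₀ P₁ : ℂ) (L : ℝ) (wA0 wA1 wB2 wB3 : ℂ) :
    residualOfCoeffs P₀ P₁ L (-wA0) (-wA1) (-wB2) (-wB3) =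
      residualOfCoeffs P₀ P₁ L wA0 wA1 wB2 wB3 := by
  simp only [residualOfCoeffs, map_neg, neg_mul, mul_neg, neg_neg, ← neg_add, neg_sq, neg_div,
    norm_neg]

lemma residualOfCoeffs_zero (P₀ P₁ : ℂ) (L : ℝ) :
    residualOfCoeffs P₀ P₁ L 0 0 0 0 = 140 / 13 * (‖P₁ - P₀‖ - L) := by
  simp only [residualOfCoeffs, add_zero, mul_zero, zero_div, ne_eq, OfNat.ofNat_ne_zero,
    not_false_eq_true, zero_pow, zero_sub, norm_neg, norm_div, norm_mul, norm_ofNat, norm_zero,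
    sub_zero, map_zero, zero_re]
  ring

lemma lengthResidual_neg (P₀ P₁ t₀ t₁ : ℂ) (κ₀ κ₁ L α₀ α₁ β₀ β₁ : ℝ) :
    lengthResidual P₀ P₁ t₀ t₁ κ₀ κ₁ L (-α₀) (-α₁) β₀ β₁ =
      lengthResidual P₀ P₁ t₀ t₁ κ₀ κ₁ L α₀ α₁ β₀ β₁ := by
  simp only [lengthResidual_eq_residualOfCoeffs, ofReal_neg, neg_mul, even_two.neg_pow,
    (by decide : Even 4).neg_pow, div_neg, residualOfCoeffs_neg]

lemma lengthResidual_zero (P₀ P₁ t₀ t₁ : ℂ) (κ₀ κ₁ L β₀ β₁ : ℝ) :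
    lengthResidual P₀ P₁ t₀ t₁ κ₀ κ₁ L 0 0 β₀ β₁ = 140 / 13 * (‖P₁ - P₀‖ - L) := by
  simp only [lengthResidual_eq_residualOfCoeffs, ofReal_zero, zero_mul, div_zero,
    residualOfCoeffs_zero]

theorem stmt12_general (P₀ P₁ t₀ t₁ : ℂ) (κ₀ κ₁ L lam : ℝ)
    (s : ℝ) :
    (∀ α₀ : ℝ,
      lengthResidual P₀ P₁ t₀ t₁ κ₀ κ₁ L (-α₀) (s * lam * (-α₀)) 0 0 =
        lengthResidual P₀ P₁ t₀ t₁ κ₀ κ₁ L α₀ (s * lam * α₀) 0 0) ∧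
    lengthResidual P₀ P₁ t₀ t₁ κ₀ κ₁ L 0 0 0 0 =
      (140 / 13) * (‖P₁ - P₀‖ - L) := by
  refine ⟨fun α₀ => ?_, lengthResidual_zero ..⟩
  rw [mul_neg, lengthResidual_neg]

/-- With `β₀ = β₁ = 0` and `α₁ = ±λα₀`, the length-constraint residual is an even function
of `α₀`, and its value at `α₀ = 0` is `(140/13)(|P₁ − P₀| − L)`. -/
theorem stmt12 (P₀ P₁ t₀ t₁ : ℂ) (κ₀ κ₁ L lam : ℝ)
    (ht₀ : ‖t₀‖ = 1) (ht₁ : ‖t₁‖ = 1)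
    (hchi₀ : 0 < ‖t₀‖ + t₀.re) (hchi₁ : 0 < ‖t₁‖ + t₁.re)
    (hlam : 0 < lam) (s : ℝ) (hs : s = 1 ∨ s = -1) :
    (∀ α₀ : ℝ,
      lengthResidual P₀ P₁ t₀ t₁ κ₀ κ₁ L (-α₀) (s * lam * (-α₀)) 0 0 =
        lengthResidual P₀ P₁ t₀ t₁ κ₀ κ₁ L α₀ (s * lam * α₀) 0 0) ∧
    lengthResidual P₀ P₁ t₀ t₁ κ₀ κ₁ L 0 0 0 0 =
      (140 / 13) * (‖P₁ - P₀‖ - L) :=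
  stmt12_general P₀ P₁ t₀ t₁ κ₀ κ₁ L lam s
end

section
/- If the piecewise preimage w (built from w_A and w_B over halved intervals) is C² at the joint and the two integrated PH segments r_A, r_B agree in position at the joint (r_A(1/2) = r_B(1/2)), then the biarc curve r defined piecewise by r_A and r_B is C³ at t = 1/2. -/
open Polynomial Complex

/-!
With `u_A t = w_A (2t)` and `u_B t = w_B (2t - 1)` we have `r_A' = u_A²` and `r_B' = u_B²`.
The chain rule multiplies the `i`-th derivative of both `u_A` and `u_B` at `1/2` by the same
factor `2^i`, so the `C²` joint says that the 2-jets of `u_A` and `u_B` agree there; by the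
Leibniz rule so do the 2-jets of their squares, which are derivatives `1, 2, 3` of `r_A, r_B`.
-/

theorem hasDerivAt_eval_ofReal_affine (p : ℂ[X]) (a b t : ℝ) :
    HasDerivAt (fun t : ℝ => p.eval ((a * t + b : ℝ) : ℂ))
      (a * (derivative p).eval ((a * t + b : ℝ) : ℂ)) t := by
  have hline : HasDerivAt (fun t : ℝ => a * t + b) a t := by
    simpa using ((hasDerivAt_id t).const_mul a).add_const b
  simpa [Function.comp_def] using (p.hasDerivAt ((a * t + b : ℝ) : ℂ)).comp_ofReal.scomp t hline

theorem iteratedDeriv_eval_ofReal_affine (p : ℂ[X]) (a b : ℝ) (k : ℕ) :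
    iteratedDeriv k (fun t : ℝ => p.eval ((a * t + b : ℝ) : ℂ)) =
      fun t => a ^ k * (derivative^[k] p).eval ((a * t + b : ℝ) : ℂ) := by
  induction k generalizing p with
  | zero => simp
  | succ k ih =>
    ext t
    rw [iteratedDeriv_succ', funext fun t => (hasDerivAt_eval_ofReal_affine p a b t).deriv,
      iteratedDeriv_const_mul_field, ih, Function.iterate_succ_apply, pow_succ']
    ring

theorem contDiff_eval_ofReal_affine (p : ℂ[X]) (a b : ℝ) (n : ℕ∞) :
    ContDiff ℝ n (fun t : ℝ => p.eval ((a * t + b : ℝ) : ℂ)) :=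
  contDiff_of_differentiable_iteratedDeriv fun m _ => by
    rw [iteratedDeriv_eval_ofReal_affine]
    exact fun t => ((hasDerivAt_eval_ofReal_affine _ a b t).differentiableAt.const_mul _)

theorem iteratedDeriv_fun_mul_eq_of_forall_le {𝕜 𝔸 : Type*} [NontriviallyNormedField 𝕜]
    [NormedRing 𝔸] [NormedAlgebra 𝕜 𝔸] {f₁ f₂ g₁ g₂ : 𝕜 → 𝔸} {x : 𝕜} {n : ℕ}
    (hf₁ : ContDiffAt 𝕜 n f₁ x) (hf₂ : ContDiffAt 𝕜 n f₂ x)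
    (hg₁ : ContDiffAt 𝕜 n g₁ x) (hg₂ : ContDiffAt 𝕜 n g₂ x)
    (hf : ∀ i ≤ n, iteratedDeriv i f₁ x = iteratedDeriv i f₂ x)
    (hg : ∀ i ≤ n, iteratedDeriv i g₁ x = iteratedDeriv i g₂ x) :
    iteratedDeriv n (fun y => f₁ y * g₁ y) x = iteratedDeriv n (fun y => f₂ y * g₂ y) x := by
  rw [iteratedDeriv_fun_mul hf₁ hg₁, iteratedDeriv_fun_mul hf₂ hg₂]
  refine Finset.sum_congr rfl fun i hi => ?_
  have hin : i ≤ n := Nat.lt_succ_iff.mp (Finset.mem_range.mp hi)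
  rw [hf i hin, hg (n - i) (Nat.sub_le n i)]

/-- If the piecewise preimage built from `w_A, w_B` over halved intervals is `C²` at the
joint and the integrated PH segments agree in position there, then the biarc is `C³` at
`t = 1/2`: the values and first three derivatives of `r_A` and `r_B` agree at `1/2`. -/
theorem stmt16 (wA wB : Polynomial ℂ) (rA rB : ℝ → ℂ)
    (hA : ∀ t : ℝ, HasDerivAt rA ((wA.eval ((2 * t : ℝ) : ℂ)) ^ 2) t)
    (hB : ∀ t : ℝ, HasDerivAt rB ((wB.eval ((2 * t - 1 : ℝ) : ℂ)) ^ 2) t)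
    (hw0 : wA.eval 1 = wB.eval 0)
    (hw1 : (Polynomial.derivative wA).eval 1 = (Polynomial.derivative wB).eval 0)
    (hw2 : (Polynomial.derivative (Polynomial.derivative wA)).eval 1 =
      (Polynomial.derivative (Polynomial.derivative wB)).eval 0)
    (hjoin : rA (1/2) = rB (1/2)) :
    ∀ k ≤ 3, iteratedDeriv k rA (1/2) = iteratedDeriv k rB (1/2) := by
  set uA : ℝ → ℂ := fun t => wA.eval ((2 * t + 0 : ℝ) : ℂ)
  set uB : ℝ → ℂ := fun t => wB.eval ((2 * t + -1 : ℝ) : ℂ)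
  have hderivA : deriv rA = fun t => uA t * uA t := funext fun t => by
    simp [uA, (hA t).deriv, sq]
  have hderivB : deriv rB = fun t => uB t * uB t := funext fun t => by
    simp [uB, (hB t).deriv, sq, sub_eq_add_neg]
  have hjet : ∀ i ≤ 2, iteratedDeriv i uA (1/2) = iteratedDeriv i uB (1/2) := by
    intro i hi
    simp only [uA, uB, iteratedDeriv_eval_ofReal_affine]
    interval_cases i <;> norm_num [hw0, hw1, hw2]
  rintro (_ | j) hj
  · exact hjoin
  · rw [iteratedDeriv_succ', iteratedDeriv_succ', hderivA, hderivB]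
    have hj : j ≤ 2 := by omega
    have huA : ContDiffAt ℝ j uA (1/2) := (contDiff_eval_ofReal_affine wA 2 0 j).contDiffAt
    have huB : ContDiffAt ℝ j uB (1/2) := (contDiff_eval_ofReal_affine wB 2 (-1) j).contDiffAt
    have hjet_le i (hi : i ≤ j) := hjet i (hi.trans hj)
    exact iteratedDeriv_fun_mul_eq_of_forall_le huA huB huA huB hjet_le hjet_le
end

section
/- Let r(t) be a degree-7 Bézier curve with control points p₀,...,p₇ given by p₀ = P₀, p₁ = P₀ + (α₀²/7)t₀, p₂ = P₀ + (2α₀²/7 + β₀/42)t₀ + κ₀(α₀⁴/42)n₀, where t₀ is a unit vector and n₀ = i·t₀. Then r(0) = P₀, r'(0) = α₀²t₀ (so the unit tangent at 0 is t₀ when α₀ ≠ 0), and the signed curvature of r at t = 0 equals κ₀. -/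
/-!
Only the first `k + 1` Bernstein polynomials of degree `n` have a nonzero `k`-th derivative at `0`,
so `r(0) = p₀`, `r'(0) = n (p₁ - p₀)` and `r''(0) = n (n - 1) (p₂ - 2 p₁ + p₀)`. With the given
`p₁, p₂` this is `r'(0) = α₀² t₀` and `r''(0) = β₀ t₀ + κ₀ α₀⁴ n₀`; since `(t₀, n₀)` is an
orthonormal frame, `Im(conj r' r'') = κ₀ α₀⁶ = κ₀ |r'|³`.
-/

open Polynomial Complex

section
variable {ι : Type*} (s : Finset ι) (p : ι → ℂ) (q : ι → ℝ[X])

theorem hasDerivAt_sum_mul_eval (t : ℝ) :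
    HasDerivAt (fun t : ℝ => ∑ i ∈ s, p i * (((q i).eval t : ℝ) : ℂ))
      (∑ i ∈ s, p i * (((derivative (q i)).eval t : ℝ) : ℂ)) t :=
  HasDerivAt.fun_sum fun i _ => ((q i).hasDerivAt t).ofReal_comp.const_mul (p i)

theorem deriv_sum_mul_eval :
    deriv (fun t : ℝ => ∑ i ∈ s, p i * (((q i).eval t : ℝ) : ℂ)) =
      fun t => ∑ i ∈ s, p i * (((derivative (q i)).eval t : ℝ) : ℂ) :=
  funext fun t => (hasDerivAt_sum_mul_eval s p q t).deriv

end

section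
variable (p : ℕ → ℂ) (n : ℕ)

theorem bezier_eval_zero :
    ∑ i ∈ Finset.range (n + 1), p i * (((bernsteinPolynomial ℝ n i).eval 0 : ℝ) : ℂ) = p 0 := by
  rw [Finset.sum_range_succ']
  simp [bernsteinPolynomial.eval_at_0]

theorem bezier_derivative_eval_zero :
    ∑ i ∈ Finset.range (n + 2),
        p i * (((derivative (bernsteinPolynomial ℝ (n + 1) i)).eval 0 : ℝ) : ℂ)
      = (n + 1) * (p 1 - p 0) := by
  have h0 : (derivative (bernsteinPolynomial ℝ (n + 1) 0)).eval 0 = -(n + 1) := by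
    simp [bernsteinPolynomial.derivative_zero, bernsteinPolynomial.eval_at_0]
  have h1 : (derivative (bernsteinPolynomial ℝ (n + 1) 1)).eval 0 = n + 1 := by
    simp [bernsteinPolynomial.derivative_succ, bernsteinPolynomial.eval_at_0]
  have h : ∀ i, (derivative (bernsteinPolynomial ℝ (n + 1) (i + 2))).eval 0 = 0 := fun i =>
    bernsteinPolynomial.iterate_derivative_at_0_eq_zero_of_lt ℝ (n + 1) (k := 1) (by omega)
  simp only [Finset.sum_range_succ', h0, h1, h, ofReal_zero, mul_zero, Finset.sum_const_zero]
  push_cast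
  ring

theorem bezier_derivative_derivative_eval_zero :
    ∑ i ∈ Finset.range (n + 3),
        p i * (((derivative (derivative (bernsteinPolynomial ℝ (n + 2) i))).eval 0 : ℝ) : ℂ)
      = (n + 2) * (n + 1) * (p 2 - 2 * p 1 + p 0) := by
  have h0 : (derivative (derivative (bernsteinPolynomial ℝ (n + 2) 0))).eval 0
      = -(n + 2) * -(n + 1) := by
    simp [bernsteinPolynomial.derivative_zero, bernsteinPolynomial.eval_at_0]
  have h1 : (derivative (derivative (bernsteinPolynomial ℝ (n + 2) 1))).eval 0
      = (n + 2) * (-(n + 1) - (n + 1)) := by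
    simp [bernsteinPolynomial.derivative_succ, bernsteinPolynomial.derivative_zero,
      bernsteinPolynomial.eval_at_0]
  have h2 : (derivative (derivative (bernsteinPolynomial ℝ (n + 2) 2))).eval 0
      = (n + 2) * (n + 1) := by
    simp [bernsteinPolynomial.derivative_succ, bernsteinPolynomial.eval_at_0]
  have h : ∀ i, (derivative (derivative (bernsteinPolynomial ℝ (n + 2) (i + 3)))).eval 0 = 0 :=
    fun i => bernsteinPolynomial.iterate_derivative_at_0_eq_zero_of_lt ℝ (n + 2) (k := 2) (by omega)
  simp only [Finset.sum_range_succ', h0, h1, h2, h, ofReal_zero, mul_zero, Finset.sum_const_zero]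
  push_cast
  ring
end

noncomputable def signedCurvature (v a : ℂ) : ℝ :=
  (starRingEnd ℂ v * a).im / ‖v‖ ^ 3

section
variable {s : ℝ} {t : ℂ}

theorem norm_ofReal_mul_of_norm_eq_one (hs : 0 ≤ s) (ht : ‖t‖ = 1) : ‖(s : ℂ) * t‖ = s := by
  rw [norm_mul, Complex.norm_real, Real.norm_eq_abs, ht, mul_one, abs_of_nonneg hs]

theorem ofReal_mul_div_norm_of_norm_eq_one (hs : 0 < s) (ht : ‖t‖ = 1) :
    (s : ℂ) * t / (‖(s : ℂ) * t‖ : ℂ) = t := by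
  rw [norm_ofReal_mul_of_norm_eq_one hs.le ht]
  exact mul_div_cancel_left₀ t (ofReal_ne_zero.mpr hs.ne')

theorem signedCurvature_ofReal_mul_frame (hs : 0 < s) (ht : ‖t‖ = 1) (β κ : ℝ) :
    signedCurvature ((s : ℂ) * t) ((β : ℂ) * t + (κ * s ^ 2 : ℝ) * (I * t)) = κ := by
  have hconj : starRingEnd ℂ t * t = 1 := by
    rw [mul_comm, mul_conj, normSq_eq_norm_sq, ht]; norm_num
  have hprod : starRingEnd ℂ ((s : ℂ) * t) * ((β : ℂ) * t + (κ * s ^ 2 : ℝ) * (I * t)) =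
      (s * β : ℝ) + (κ * s ^ 3 : ℝ) * I := by
    rw [map_mul, conj_ofReal]
    push_cast
    linear_combination ((s : ℂ) * β + κ * s ^ 3 * I) * hconj
  rw [signedCurvature, hprod, norm_ofReal_mul_of_norm_eq_one hs.le ht]
  simp only [add_im, ofReal_im, mul_I_im, ofReal_re, zero_add]
  field_simp
end

/-- For a degree-7 Bézier curve with `p₀ = P₀`, `p₁ = P₀ + (α₀²/7)t₀`,
`p₂ = P₀ + (2α₀²/7 + β₀/42)t₀ + κ₀(α₀⁴/42)n₀` (with `t₀` a unit vector, `n₀ = i t₀`,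
`α₀ ≠ 0`), one has `r(0) = P₀`, `r'(0) = α₀²t₀` (so the unit tangent at `0` is `t₀`),
and the signed curvature at `t = 0` equals `κ₀`. -/
theorem stmt17 (p : ℕ → ℂ) (P₀ t₀ : ℂ) (α₀ β₀ κ₀ : ℝ)
    (ht₀ : ‖t₀‖ = 1) (hα₀ : α₀ ≠ 0)
    (hp0 : p 0 = P₀)
    (hp1 : p 1 = P₀ + ((α₀ ^ 2 / 7 : ℝ) : ℂ) * t₀)
    (hp2 : p 2 = P₀ + ((2 * α₀ ^ 2 / 7 + β₀ / 42 : ℝ) : ℂ) * t₀ +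
      ((κ₀ : ℂ) * ((α₀ ^ 4 / 42 : ℝ) : ℂ)) * (Complex.I * t₀)) :
    let r : ℝ → ℂ := fun t =>
      ∑ i ∈ Finset.range 8, p i * (((bernsteinPolynomial ℝ 7 i).eval t : ℝ) : ℂ)
    r 0 = P₀ ∧
    deriv r 0 = ((α₀ ^ 2 : ℝ) : ℂ) * t₀ ∧
    deriv r 0 / ((‖deriv r 0‖ : ℝ) : ℂ) = t₀ ∧
    (starRingEnd ℂ (deriv r 0) * deriv (deriv r) 0).im / (‖deriv r 0‖) ^ 3 =
      κ₀ := by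
  intro r
  have hr1 : deriv r 0 = ((α₀ ^ 2 : ℝ) : ℂ) * t₀ := by
    rw [deriv_sum_mul_eval]
    refine (bezier_derivative_eval_zero p 6).trans ?_
    rw [hp0, hp1]
    push_cast; ring
  have hr2 : deriv (deriv r) 0 = (β₀ : ℂ) * t₀ + ((κ₀ * (α₀ ^ 2) ^ 2 : ℝ) : ℂ) * (I * t₀) := by
    rw [deriv_sum_mul_eval, deriv_sum_mul_eval]
    refine (bezier_derivative_derivative_eval_zero p 5).trans ?_
    rw [hp0, hp1, hp2]
    push_cast; ring
  have hα₀sq : 0 < α₀ ^ 2 := by positivity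
  refine ⟨(bezier_eval_zero p 7).trans hp0, hr1, ?_, ?_⟩
  · rw [hr1]
    exact ofReal_mul_div_norm_of_norm_eq_one hα₀sq ht₀
  · rw [hr1, hr2]
    exact signedCurvature_ofReal_mul_frame hα₀sq ht₀ β₀ κ₀
end
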